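/- arXiv:2605.14175 — 6 statements merged into one kernel-verified Lean document; each statement's English description precedes it below -/
import Mathlib

section
/- In any argumentation framework (Args, Att), the union of a nonempty chain (a family of admissible sets totally ordered by inclusion) of admissible sets is again admissible. -/
def ConflictFree {α : Type*} (Att : Set (α × α)) (S : Set α) : Prop :=
  ∀ a ∈ S, ∀ b ∈ S, (a, b) ∉ Att

def Acceptable {α : Type*} (Att : Set (α × α)) (S : Set α) (a : α) : Prop :=
  ∀ b, (b, a) ∈ Att → ∃ c ∈ S, (c, b) ∈ Att

def Admissible {α : Type*} (Att : Set (α × α)) (S : Set α) : Prop :=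
  ConflictFree Att S ∧ ∀ a ∈ S, Acceptable Att S a

/-- The union of a nonempty chain of admissible sets is admissible. -/
theorem sUnion_chain_admissible {α : Type*} (Att : Set (α × α))
    (C : Set (Set α)) (hne : C.Nonempty) (hchain : IsChain (· ⊆ ·) C)
    (hadm : ∀ S ∈ C, Admissible Att S) :
    Admissible Att (⋃₀ C) := by
  constructor
  · rintro a ⟨S, hS, haS⟩ b ⟨T, hT, hbT⟩ hab
    rcases eq_or_ne S T with rfl | hne'
    · exact (hadm S hS).1 a haS b hbT hab
    · rcases hchain hS hT hne' with h | h
      · exact (hadm T hT).1 a (h haS) b hbT hab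
      · exact (hadm S hS).1 a haS b (h hbT) hab
  · rintro a ⟨S, hS, haS⟩ b hba
    obtain ⟨c, hc, hcb⟩ := (hadm S hS).2 a haS b hba
    exact ⟨c, ⟨S, hS, hc⟩, hcb⟩
end

section
/- In any argumentation framework (Args, Att), every admissible set is contained in some preferred extension. -/
/-- `S` is a preferred extension: a ⊆-maximal admissible set. -/
def Preferred {α : Type*} (Att : Set (α × α)) (S : Set α) : Prop :=
  Admissible Att S ∧ ∀ T, Admissible Att T → S ⊆ T → T = S

/-- Every admissible set is contained in some preferred extension. -/
theorem admissible_subset_preferred {α : Type*} (Att : Set (α × α))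
    (S : Set α) (hS : Admissible Att S) :
    ∃ E : Set α, Preferred Att E ∧ S ⊆ E := by
  obtain ⟨E, hSE, hE, hmax⟩ := zorn_subset_nonempty {T | Admissible Att T}
    (fun c hc hchain hne => by
      refine ⟨⋃₀ c, ⟨?_, ?_⟩, fun T hT => Set.subset_sUnion_of_mem hT⟩
      · rintro a ⟨A, hA, ha⟩ b ⟨B, hB, hb⟩
        rcases hchain.total hA hB with h | h
        · exact (hc hB).1 a (h ha) b hb
        · exact (hc hA).1 a ha b (h hb)
      · rintro a ⟨A, hA, ha⟩ b hb
        obtain ⟨c, hcA, hatt⟩ := (hc hA).2 a ha b hb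
        exact ⟨c, ⟨A, hA, hcA⟩, hatt⟩) S hS
  exact ⟨E, ⟨hE, fun T hT hET => Set.Subset.antisymm (hmax hT hET) hET⟩, hSE⟩
end

section
/- (Fundamental lemma) Let (Args, Att) be an argumentation framework, S ⊆ Args an admissible set, and let a and a' be arguments each acceptable with respect to S. Then S ∪ {a} is admissible, and a' is acceptable with respect to S ∪ {a}. -/
/-- Dung's fundamental lemma: if `S` is admissible and `a`, `a'` are both acceptable
w.r.t. `S`, then `S ∪ {a}` is admissible and `a'` is acceptable w.r.t. `S ∪ {a}`. -/
theorem fundamental_lemma {α : Type*} (Att : Set (α × α)) (S : Set α)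
    (hS : Admissible Att S) (a a' : α)
    (ha : Acceptable Att S a) (ha' : Acceptable Att S a') :
    Admissible Att (S ∪ {a}) ∧ Acceptable Att (S ∪ {a}) a' := by
  obtain ⟨hcf, hacc⟩ := hS
  constructor
  · constructor
    · rintro x (hx | rfl) y (hy | rfl) hxy
      · exact hcf x hx y hy hxy
      · -- x ∈ S attacks a
        obtain ⟨c, hc, hca⟩ := ha x hxy
        obtain ⟨d, hd, hdc⟩ := hacc x hx c hca
        exact hcf d hd c hc hdc
      · -- a attacks y ∈ S
        obtain ⟨c, hc, hcx⟩ := hacc y hy x hxy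
        obtain ⟨d, hd, hdc⟩ := ha c hcx
        exact hcf d hd c hc hdc
      · -- a attacks a
        obtain ⟨c, hc, hca⟩ := ha _ hxy
        obtain ⟨d, hd, hdc⟩ := ha c hca
        exact hcf d hd c hc hdc
    · rintro x (hx | rfl)
      · intro b hb
        obtain ⟨c, hc, hcb⟩ := hacc x hx b hb
        exact ⟨c, Or.inl hc, hcb⟩
      · intro b hb
        obtain ⟨c, hc, hcb⟩ := ha b hb
        exact ⟨c, Or.inl hc, hcb⟩
  · intro b hb
    obtain ⟨c, hc, hcb⟩ := ha' b hb
    exact ⟨c, Or.inl hc, hcb⟩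
end

section
/- In any argumentation framework (Args, Att), every preferred extension is a complete extension: if S is a ⊆-maximal admissible set, then S contains every argument that is acceptable with respect to S. -/
/-- `S` is a complete extension: admissible and containing every argument
acceptable with respect to it. -/
def Complete {α : Type*} (Att : Set (α × α)) (S : Set α) : Prop :=
  Admissible Att S ∧ ∀ a, Acceptable Att S a → a ∈ S

/-- Every preferred extension is a complete extension. -/
theorem preferred_is_complete {α : Type*} (Att : Set (α × α)) (S : Set α)
    (hS : Preferred Att S) : Complete Att S := by
  obtain ⟨⟨hcf, hacc⟩, hmax⟩ := hS
  refine ⟨⟨hcf, hacc⟩, ?_⟩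
  intro a ha
  -- S ∪ {a} is admissible
  have hT : Admissible Att (S ∪ {a}) := by
    constructor
    · rintro x (hx | rfl) y (hy | rfl) hxy
      · exact hcf x hx y hy hxy
      · -- x ∈ S attacks a; a is acceptable, so S attacks x, contradicting cf
        obtain ⟨c, hc, hcx⟩ := ha x hxy
        exact hcf c hc x hx hcx
      · -- a attacks y ∈ S; y acceptable gives c ∈ S attacking a, then
        -- a acceptable gives d ∈ S attacking c, contradicting cf
        obtain ⟨c, hc, hca⟩ := hacc y hy x hxy
        obtain ⟨d, hd, hdc⟩ := ha c hca
        exact hcf d hd c hc hdc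
      · -- a attacks a: a acceptable gives c ∈ S attacking a, then again
        obtain ⟨c, hc, hca⟩ := ha y hxy
        obtain ⟨d, hd, hdc⟩ := ha c hca
        exact hcf d hd c hc hdc
    · rintro x (hx | rfl) b hb
      · obtain ⟨c, hc, hcb⟩ := hacc x hx b hb
        exact ⟨c, Or.inl hc, hcb⟩
      · obtain ⟨c, hc, hcb⟩ := ha b hb
        exact ⟨c, Or.inl hc, hcb⟩
  have := hmax (S ∪ {a}) hT (Set.subset_union_left)
  have : a ∈ S := this ▸ Set.mem_union_right S rfl
  exact this
end

section
/- For any argumentation framework (Args, Att), the characteristic function F is monotone with respect to inclusion; consequently F has a least fixed point G (the grounded extension). Moreover G is admissible, G is a complete extension, and G is contained in every complete extension of (Args, Att). -/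
/-- The characteristic function: `charF Att S` is the set of arguments
acceptable with respect to `S`. -/
def charF {α : Type*} (Att : Set (α × α)) (S : Set α) : Set α :=
  {a | Acceptable Att S a}

theorem charF_monotone {α : Type*} (Att : Set (α × α)) : Monotone (charF Att) := by
  intro S T hST a ha b hb
  obtain ⟨c, hc, hcb⟩ := ha b hb
  exact ⟨c, hST hc, hcb⟩

/-- The characteristic function is monotone; consequently it has a least fixed
point `G` (the grounded extension), and `G` is admissible, a complete extension,
and contained in every complete extension. -/
theorem grounded_extension {α : Type*} (Att : Set (α × α)) :
    Monotone (charF Att) ∧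
    ∃ G : Set α, charF Att G = G ∧ (∀ T, charF Att T = T → G ⊆ T) ∧
      Admissible Att G ∧ Complete Att G ∧ ∀ T, Complete Att T → G ⊆ T := by
  set f : Set α →o Set α := ⟨charF Att, charF_monotone Att⟩ with hf
  set G := OrderHom.lfp f with hG
  have hfix : charF Att G = G := f.map_lfp
  have hleast : ∀ T, charF Att T = T → G ⊆ T := fun T hT =>
    OrderHom.lfp_le_fixed f hT
  -- every element of G is acceptable wrt G
  have hacc : ∀ a ∈ G, Acceptable Att G a := fun a ha => show a ∈ charF Att G by rw [hfix]; exact ha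
  -- conflict-freeness via lfp induction: "S does not conflict with G"
  have hcf : ConflictFree Att G := by
    have key : ∀ a ∈ G, ∀ b ∈ G, (a, b) ∉ Att ∧ (b, a) ∉ Att := by
      refine OrderHom.lfp_induction f
        (p := fun S => ∀ a ∈ S, ∀ b ∈ G, (a, b) ∉ Att ∧ (b, a) ∉ Att)
        ?_ ?_
      · intro S hS hSG a ha b hb
        constructor
        · intro hab
          obtain ⟨c, hcG, hca⟩ := hacc b hb a hab
          obtain ⟨d, hdS, hdc⟩ := ha c hca
          exact (hS d hdS c hcG).1 hdc
        · intro hba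
          obtain ⟨c, hcS, hcb⟩ := ha b hba
          exact (hS c hcS b hb).1 hcb
      · intro s hs a ha b hb
        simp only [Set.sSup_eq_sUnion, Set.mem_sUnion] at ha
        obtain ⟨S, hSs, haS⟩ := ha
        exact hs S hSs a haS b hb
    exact fun a ha b hb => (key a ha b hb).1
  have hadm : Admissible Att G := ⟨hcf, hacc⟩
  have hcomp : Complete Att G := ⟨hadm, fun a ha => hfix ▸ ha⟩
  refine ⟨charF_monotone Att, G, hfix, hleast, hadm, hcomp, ?_⟩
  intro T hT
  apply hleast
  apply Set.Subset.antisymm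
  · intro a ha; exact hT.2 a ha
  · intro a ha; exact hT.1.2 a ha
end

section
/- Let (Args, Att) be an argumentation framework whose attack relation is well-founded (there is no infinite sequence a₀, a₁, a₂, … with (aᵢ₊₁, aᵢ) ∈ Att for all i; in particular this covers every finite framework with acyclic attack graph). Then (Args, Att) has exactly one complete extension, and this extension is simultaneously the grounded extension, the unique preferred extension, and the unique stable extension. -/
/-- `S` is a stable extension: conflict-free and attacking every outside argument. -/
def Stable {α : Type*} (Att : Set (α × α)) (S : Set α) : Prop :=
  ConflictFree Att S ∧ ∀ a ∉ S, ∃ b ∈ S, (b, a) ∈ Att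

noncomputable def gmem {α : Type*} (Att : Set (α × α))
    (hwf : WellFounded (fun a b => (a, b) ∈ Att)) : α → Prop :=
  hwf.fix (fun a ih => ∀ b, ∀ h : (b, a) ∈ Att, ¬ ih b h)

lemma gmem_iff {α : Type*} (Att : Set (α × α))
    (hwf : WellFounded (fun a b => (a, b) ∈ Att)) (a : α) :
    gmem Att hwf a ↔ ∀ b, (b, a) ∈ Att → ¬ gmem Att hwf b := by
  unfold gmem
  rw [WellFounded.fix_eq]

/-- A well-founded attack relation (no infinite sequence `a₀, a₁, …` with `aᵢ₊₁`
attacking `aᵢ`) yields exactly one complete extension, which is simultaneously the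
grounded extension (least fixed point of the characteristic function), the unique
preferred extension, and the unique stable extension. -/
theorem wellFounded_unique_extension {α : Type*} (Att : Set (α × α))
    (hwf : WellFounded (fun a b => (a, b) ∈ Att)) :
    ∃ G : Set α,
      Complete Att G ∧ (∀ S, Complete Att S → S = G) ∧
      charF Att G = G ∧ (∀ T, charF Att T = T → G ⊆ T) ∧
      Preferred Att G ∧ (∀ S, Preferred Att S → S = G) ∧
      Stable Att G ∧ (∀ S, Stable Att S → S = G) := by
  set G : Set α := {a | gmem Att hwf a} with hG
  have hGmem : ∀ a, a ∈ G ↔ ∀ b, (b, a) ∈ Att → b ∉ G := fun a => gmem_iff Att hwf a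
  have htwf : WellFounded (Relation.TransGen (fun a b => (a, b) ∈ Att)) := hwf.transGen
  -- conflict-free
  have hcf : ConflictFree Att G := by
    intro a ha b hb hab
    exact (hGmem b).1 hb a hab ha
  -- stable
  have hstab : Stable Att G := by
    refine ⟨hcf, fun a ha => ?_⟩
    rw [hGmem] at ha
    push_neg at ha
    obtain ⟨b, hb1, hb2⟩ := ha
    exact ⟨b, hb2, hb1⟩
  -- admissible
  have hadm : Admissible Att G := by
    refine ⟨hcf, fun a ha b hba => ?_⟩
    exact hstab.2 b ((hGmem a).1 ha b hba)
  -- complete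
  have hcomp : Complete Att G := by
    refine ⟨hadm, fun a hacc => ?_⟩
    rw [hGmem]
    intro b hba hb
    obtain ⟨c, hc, hcb⟩ := hacc b hba
    exact hcf c hc b hb hcb
  -- any admissible set is contained in G
  have hadmsub : ∀ S, Admissible Att S → S ⊆ G := by
    intro S hS
    intro a
    induction a using htwf.induction with
    | _ a ih =>
      intro haS
      rw [hGmem]
      intro b hba hbG
      obtain ⟨c, hcS, hcb⟩ := hS.2 a haS b hba
      have hcG : c ∈ G :=
        ih c (Relation.TransGen.head hcb (Relation.TransGen.single hba)) hcS
      exact hcf c hcG b hbG hcb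
  -- G is contained in any complete set
  have hsubcomp : ∀ S, Complete Att S → G ⊆ S := by
    intro S hS a
    induction a using htwf.induction with
    | _ a ih =>
      intro haG
      refine hS.2 a (fun b hba => ?_)
      obtain ⟨c, hcG, hcb⟩ := hstab.2 b ((hGmem a).1 haG b hba)
      exact ⟨c, ih c (Relation.TransGen.head hcb (Relation.TransGen.single hba)) hcG, hcb⟩
  refine ⟨G, hcomp, ?_, ?_, ?_, ?_, ?_, hstab, ?_⟩
  · intro S hS
    exact Set.Subset.antisymm (hadmsub S hS.1) (hsubcomp S hS)
  · -- charF G = G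
    ext a
    exact ⟨fun h => hcomp.2 a h, fun h => hadm.2 a h⟩
  · -- least fixed point
    intro T hT a
    induction a using htwf.induction with
    | _ a ih =>
      intro haG
      have : a ∈ charF Att T := by
        intro b hba
        obtain ⟨c, hcG, hcb⟩ := hstab.2 b ((hGmem a).1 haG b hba)
        exact ⟨c, ih c (Relation.TransGen.head hcb (Relation.TransGen.single hba)) hcG, hcb⟩
      rwa [hT] at this
  · -- preferred
    exact ⟨hadm, fun T hT hGT => Set.Subset.antisymm (hadmsub T hT) hGT⟩
  · -- unique preferred
    intro S hS
    exact (hS.2 G hadm (hadmsub S hS.1)).symm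
  · -- unique stable
    intro S hS
    have hSadm : Admissible Att S := by
      refine ⟨hS.1, fun a ha b hba => ?_⟩
      have hbS : b ∉ S := fun hb => hS.1 b hb a ha hba
      exact hS.2 b hbS
    refine Set.Subset.antisymm (hadmsub S hSadm) (fun a haG => ?_)
    by_contra haS
    obtain ⟨b, hbS, hba⟩ := hS.2 a haS
    exact hcf b (hadmsub S hSadm hbS) a haG hba
end
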